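/- arXiv:1609.02238 — 7 statements merged into one kernel-verified Lean document; each statement's English description precedes it below -/
import Mathlib

section
/- Let Ω ⊂ ℝˢ be closed, z̄ ∈ Ω, v ∈ T_Ω(z̄) (the contingent/tangent cone), and λ ∈ ℝˢ. Define the upper curvature χ̄_Ω(λ,z̄;v) := lim_{ε↓0} sup{⟨λ, v'−v⟩/τ : 0 < τ < ε, ‖v'−v‖ < ε, z̄ + τv' ∈ Ω}. Then χ̄_Ω(λ,z̄;v) ≥ (1/2) sup{⟨λ,w⟩ : w ∈ T²_Ω(z̄;v)}, where T²_Ω(z̄;v) := limsup_{τ↓0} (Ω − z̄ − τv)/(τ²/2) is the outer second-order tangent set. -/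
open Filter Topology
open scoped RealInnerProductSpace

/-- The contingent (Bouligand) cone. -/
def contTangent {E : Type*} [NormedAddCommGroup E] [NormedSpace ℝ E]
    (Ω : Set E) (z : E) : Set E :=
  {u | ∃ (t : ℕ → ℝ) (w : ℕ → E), (∀ k, 0 < t k) ∧ Tendsto t atTop (𝓝 0) ∧
    Tendsto w atTop (𝓝 u) ∧ ∀ k, z + t k • w k ∈ Ω}

/-- The upper curvature of a set (the limit as ε ↓ 0 of the ε-suprema, which
equals the infimum over ε > 0 by monotonicity). -/
noncomputable def upperCurv {E : Type*} [NormedAddCommGroup E] [InnerProductSpace ℝ E]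
    (Ω : Set E) (lam z v : E) : EReal :=
  ⨅ ε : {ε : ℝ // 0 < ε},
    sSup {r : EReal | ∃ (τ : ℝ) (v' : E), 0 < τ ∧ τ < ε.1 ∧ ‖v' - v‖ < ε.1 ∧
      z + τ • v' ∈ Ω ∧ r = ((⟪lam, v' - v⟫ / τ : ℝ) : EReal)}

/-- The outer second-order tangent set. -/
def secondTangent {E : Type*} [NormedAddCommGroup E] [NormedSpace ℝ E]
    (Ω : Set E) (z v : E) : Set E :=
  {w | ∃ (τ : ℕ → ℝ) (ws : ℕ → E), (∀ k, 0 < τ k) ∧ Tendsto τ atTop (𝓝 0) ∧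
    Tendsto ws atTop (𝓝 w) ∧ ∀ k, z + τ k • v + ((τ k) ^ 2 / 2) • ws k ∈ Ω}

/-- the upper curvature dominates half the support of the outer
second-order tangent set. -/
theorem upperCurv_ge_half_sup_secondTangent {s : ℕ}
    (Ω : Set (EuclideanSpace ℝ (Fin s))) (hΩ : IsClosed Ω)
    (zb : EuclideanSpace ℝ (Fin s)) (hz : zb ∈ Ω)
    (v : EuclideanSpace ℝ (Fin s)) (hv : v ∈ contTangent Ω zb)
    (lam : EuclideanSpace ℝ (Fin s)) :
    (1 / 2 : EReal) *
        sSup {r : EReal | ∃ w ∈ secondTangent Ω zb v, r = ((⟪lam, w⟫ : ℝ) : EReal)} ≤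
      upperCurv Ω lam zb v := by
  have key : ∀ w ∈ secondTangent Ω zb v,
      ((⟪lam, w⟫ / 2 : ℝ) : EReal) ≤ upperCurv Ω lam zb v := by
    rintro w ⟨τ, ws, hpos, hτ0, hws, hmem⟩
    refine le_iInf fun ε => ?_
    obtain ⟨e, he⟩ := ε
    have h1 : ∀ᶠ k in atTop, τ k < e := hτ0.eventually_lt_const he
    have h2 : Tendsto (fun k => (τ k / 2) • ws k) atTop (𝓝 ((0 : ℝ) • w)) := by
      simpa using (hτ0.div_const 2).smul hws
    rw [zero_smul] at h2
    have h2n : Tendsto (fun k => ‖(τ k / 2) • ws k‖) atTop (𝓝 0) := by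
      simpa using h2.norm
    have h3 : ∀ᶠ k in atTop, ‖(τ k / 2) • ws k‖ < e := h2n.eventually_lt_const he
    have h4 : Tendsto (fun k => ⟪lam, ws k⟫ / 2) atTop (𝓝 (⟪lam, w⟫ / 2)) :=
      (Tendsto.inner tendsto_const_nhds hws).div_const 2
    refine le_of_tendsto (EReal.tendsto_coe.2 h4) ?_
    filter_upwards [h1, h3] with k hk1 hk3
    apply le_sSup
    refine ⟨τ k, v + (τ k / 2) • ws k, hpos k, hk1, by simpa using hk3, ?_, ?_⟩
    · have heq : zb + τ k • (v + (τ k / 2) • ws k)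
          = zb + τ k • v + (τ k ^ 2 / 2) • ws k := by
        rw [smul_add, smul_smul, ← add_assoc]
        congr 2
        ring
      rw [heq]; exact hmem k
    · have hτne : τ k ≠ 0 := (hpos k).ne'
      congr 1
      rw [add_sub_cancel_left, real_inner_smul_right]
      field_simp
  have h12 : (1 / 2 : EReal) *
      sSup {r : EReal | ∃ w ∈ secondTangent Ω zb v, r = ((⟪lam, w⟫ : ℝ) : EReal)}
      = sSup {r : EReal | ∃ w ∈ secondTangent Ω zb v, r = ((⟪lam, w⟫ : ℝ) : EReal)} / 2 := by
    rw [one_div, mul_comm]; rfl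
  rw [h12, EReal.div_le_iff_le_mul (by norm_num)
    (show (2 : EReal) ≠ ⊤ from by
      rw [show (2 : EReal) = ((2 : ℝ) : EReal) from rfl]; exact EReal.coe_ne_top 2)]
  refine sSup_le ?_
  rintro r ⟨w, hw, rfl⟩
  calc ((⟪lam, w⟫ : ℝ) : EReal)
      = ((2 : ℝ) : EReal) * ((⟪lam, w⟫ / 2 : ℝ) : EReal) := by
        rw [← EReal.coe_mul]; exact congrArg _ (by ring)
    _ ≤ 2 * upperCurv Ω lam zb v :=
        mul_le_mul_of_nonneg_left (key w hw) (by norm_num)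
end

section
/- Let Ω = {z ∈ ℝˢ : q(z) ∈ Q}, where q: ℝˢ → ℝᵖ is twice differentiable at z̄ ∈ Ω, Q ⊂ ℝᵖ is closed and convex, and the mapping z ↦ q(z) − Q is metrically subregular at (z̄, 0). Let v ∈ T_Ω(z̄), λ ∈ N_Ω(z̄) (limiting normal cone) with ⟨λ,v⟩ = 0. Then the upper curvature satisfies χ̄_Ω(λ,z̄;v) ≤ −(1/2) sup{⟨∇²⟨μ,q⟩(z̄)v, v⟩ : μ ∈ N_Q(q(z̄)), λ = ∇q(z̄)*μ}. -/
open Filter Topology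
open scoped RealInnerProductSpace

/-- The regular (Fréchet) normal cone: the polar of the contingent cone. -/
def regNormal {E : Type*} [NormedAddCommGroup E] [InnerProductSpace ℝ E]
    (Ω : Set E) (z : E) : Set E :=
  {v | ∀ u ∈ contTangent Ω z, ⟪v, u⟫ ≤ (0 : ℝ)}

/-- The limiting (Mordukhovich) normal cone. -/
def limNormal {E : Type*} [NormedAddCommGroup E] [InnerProductSpace ℝ E]
    (Ω : Set E) (z : E) : Set E :=
  {v | ∃ (zs vs : ℕ → E), (∀ k, zs k ∈ Ω) ∧ (∀ k, vs k ∈ regNormal Ω (zs k)) ∧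
    Tendsto zs atTop (𝓝 z) ∧ Tendsto vs atTop (𝓝 v)}

/-! If `μ ∈ N_Q(q z̄)`, `λ = ∇q(z̄)* μ` and `z̄ + τ v' ∈ Ω`, then `⟨μ, q(z̄ + τ v') - q z̄⟩ ≤ 0`;
together with `⟨λ, v⟩ = 0` this gives
`⟨λ, v' - v⟩ / τ = ⟨μ, ∇q(z̄) v'⟩ / τ ≤ -⟨μ, q(z̄ + τ v') - q z̄ - τ ∇q(z̄) v'⟩ / τ²`.
By a second-order Taylor expansion of `q` at `z̄`, uniform in the direction `v'`, the right-hand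
side tends to `-½ ⟨∇²⟨μ, q⟩(z̄) v, v⟩` as `τ ↓ 0` and `v' → v`, which bounds the upper curvature;
it remains to take the supremum over `μ`. -/

open Asymptotics

theorem EReal.le_neg_half_mul_sSup {x : EReal} {S : Set EReal}
    (h : ∀ r ∈ S, x ≤ -(1 / 2 * r)) : x ≤ -(1 / 2 * sSup S) := by
  have h2 : (0 : EReal) < 2 := by norm_num
  have h2' : (2 : EReal) ≠ ⊤ := EReal.coe_ne_top 2
  simp only [one_div, ← EReal.div_eq_inv_mul] at h ⊢
  refine EReal.le_neg_of_le_neg ((EReal.div_le_iff_le_mul h2 h2').mpr (sSup_le fun r hr => ?_))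
  exact (EReal.div_le_iff_le_mul h2 h2').mp (EReal.le_neg_of_le_neg (h r hr))

section Taylor

variable {E F : Type*} [NormedAddCommGroup E] [NormedSpace ℝ E]
  [NormedAddCommGroup F] [NormedSpace ℝ F]

theorem isLittleO_sub_sq_of_hasFDerivAt {g : E → F} {g' : E → E →L[ℝ] F}
    (hg : ∀ᶠ y in 𝓝 0, HasFDerivAt g (g' y) y) (hg' : g' =o[𝓝 0] fun y => y) :
    (fun h => g h - g 0) =o[𝓝 0] fun h => ‖h‖ ^ 2 := by
  refine isLittleO_iff.mpr fun η hη => ?_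
  obtain ⟨ρ, hρ, hball⟩ :=
    Metric.eventually_nhds_iff_ball.mp (hg.and (isLittleO_iff.mp hg' hη))
  filter_upwards [Metric.ball_mem_nhds 0 hρ] with h hh
  have hsub : Metric.closedBall (0 : E) ‖h‖ ⊆ Metric.ball 0 ρ :=
    Metric.closedBall_subset_ball (by simpa using hh)
  have hmvt := (convex_closedBall (0 : E) ‖h‖).norm_image_sub_le_of_norm_hasFDerivWithin_le
    (fun y hy => (hball y (hsub hy)).1.hasFDerivWithinAt)
    (fun y hy => (hball y (hsub hy)).2.trans
      (mul_le_mul_of_nonneg_left (by simpa using hy) hη.le))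
    (Metric.mem_closedBall_self (norm_nonneg h)) (y := h) (by simp)
  simpa [sq, mul_assoc] using hmvt

theorem isLittleO_taylor_two {f : E → F} {x : E}
    (hf : ∀ᶠ y in 𝓝 x, DifferentiableAt ℝ f y) (hf' : DifferentiableAt ℝ (fderiv ℝ f) x) :
    (fun h => f (x + h) - f x - fderiv ℝ f x h - (1 / 2 : ℝ) • fderiv ℝ (fderiv ℝ f) x h h)
      =o[𝓝 0] fun h => ‖h‖ ^ 2 := by
  set A := fderiv ℝ f x
  set B := fderiv ℝ (fderiv ℝ f) x
  have hB : HasFDerivAt (fderiv ℝ f) B x := hf'.hasFDerivAt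
  have hsymm : ∀ a b, B a b = B b a :=
    second_derivative_symmetric_of_eventually (hf.mono fun y hy => hy.hasFDerivAt) hB
  -- symmetry of `B` is what makes `B y` the derivative of the quadratic term
  have hquad : ∀ y, HasFDerivAt (fun h => (1 / 2 : ℝ) • B h h) (B y) y := by
    intro y
    refine ((B.hasFDerivAt.clm_apply (hasFDerivAt_id y)).const_smul (1 / 2 : ℝ)).congr_fderiv ?_
    ext k
    simp [hsymm k y]
    module
  have hshift : ∀ᶠ y in 𝓝 (0 : E), HasFDerivAt (fun h => f (x + h)) (fderiv ℝ f (x + y)) y := by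
    have : Tendsto (fun h : E => x + h) (𝓝 0) (𝓝 x) := by
      simpa using (continuous_const_add x).tendsto (0 : E)
    filter_upwards [this.eventually hf] with y hy
    simpa [Function.comp_def] using hy.hasFDerivAt.comp y ((hasFDerivAt_id y).const_add x)
  have hrem := isLittleO_sub_sq_of_hasFDerivAt
    (hshift.mono fun y hy => (hy.sub A.hasFDerivAt).sub (hquad y))
    (hasFDerivAt_iff_isLittleO_nhds_zero.mp hB)
  convert hrem using 2 with h
  simp
  abel

theorem tendsto_second_difference_quotient {f : E → F} {x : E}
    (hf : ∀ᶠ y in 𝓝 x, DifferentiableAt ℝ f y) (hf' : DifferentiableAt ℝ (fderiv ℝ f) x)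
    (v : E) :
    Tendsto (fun p : ℝ × E => (p.1 ^ 2)⁻¹ • (f (x + p.1 • p.2) - f x - p.1 • fderiv ℝ f x p.2))
      (𝓝[≠] 0 ×ˢ 𝓝 v) (𝓝 ((1 / 2 : ℝ) • fderiv ℝ (fderiv ℝ f) x v v)) := by
  set B := fderiv ℝ (fderiv ℝ f) x
  set l := 𝓝[≠] (0 : ℝ) ×ˢ 𝓝 v
  have hl : l ≤ 𝓝 (0, v) := by
    rw [nhds_prod_eq]; exact prod_mono_left _ nhdsWithin_le_nhds
  have hsmul : Tendsto (fun p : ℝ × E => p.1 • p.2) l (𝓝 0) := by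
    have hc : Continuous fun p : ℝ × E => p.1 • p.2 := continuous_fst.smul continuous_snd
    simpa using (hc.tendsto (0, v)).mono_left hl
  have hsq : (fun p : ℝ × E => ‖p.1 • p.2‖ ^ 2) =O[l] fun p => p.1 ^ 2 := by
    have hbdd : (fun p : ℝ × E => ‖p.2‖ ^ 2) =O[l] fun _ => (1 : ℝ) :=
      (((continuous_snd.norm.pow 2).tendsto (0, v)).mono_left hl).isBigO_one ℝ
    simpa [norm_smul, mul_pow] using (isBigO_refl (fun p : ℝ × E => p.1 ^ 2) l).mul hbdd
  have hrem := ((isLittleO_taylor_two hf hf').comp_tendsto hsmul).trans_isBigO hsq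
  have hquad : Tendsto (fun p : ℝ × E => (1 / 2 : ℝ) • B p.2 p.2) l (𝓝 ((1 / 2 : ℝ) • B v v)) :=
    ((continuous_const.smul (B.continuous₂.comp (continuous_snd.prodMk continuous_snd))).tendsto
      (0, v)).mono_left hl
  refine (zero_add ((1 / 2 : ℝ) • B v v) ▸ hrem.tendsto_inv_smul_nhds_zero.add hquad).congr' ?_
  filter_upwards [prod_mem_prod self_mem_nhdsWithin univ_mem] with p hp
  have hp0 : p.1 ≠ 0 := hp.1
  simp only [Function.comp_apply, map_smul, smul_apply, smul_smul]
  rw [smul_sub, smul_smul, show (p.1 ^ 2)⁻¹ * (1 / 2 * (p.1 * p.1)) = 1 / 2 by field_simp]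
  abel

end Taylor

section Curvature

variable {E : Type*} [NormedAddCommGroup E] [InnerProductSpace ℝ E]

theorem upperCurv_le_of_tendsto {Ω : Set E} {lam z v : E} {φ : ℝ × E → ℝ} {c : ℝ}
    (hφ : Tendsto φ (𝓝[>] 0 ×ˢ 𝓝 v) (𝓝 c))
    (hle : ∀ τ > 0, ∀ v', z + τ • v' ∈ Ω → ⟪lam, v' - v⟫ / τ ≤ φ (τ, v')) :
    upperCurv Ω lam z v ≤ c := by
  refine EReal.le_of_forall_lt_iff_le.mp fun w hw => ?_
  obtain ⟨⟨a, b⟩, ⟨ha, hb⟩, hab⟩ :=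
    ((nhdsGT_basis (0 : ℝ)).prod (Metric.nhds_basis_ball (x := v))).mem_iff.mp
      (hφ (Iio_mem_nhds (EReal.coe_lt_coe_iff.mp hw)))
  refine (iInf_le _ ⟨min a b, lt_min ha hb⟩).trans (sSup_le ?_)
  rintro _ ⟨τ, v', hτ, hτε, hv'ε, hmem, rfl⟩
  have hφw : φ (τ, v') < w :=
    hab ⟨⟨hτ, hτε.trans_le (min_le_left a b)⟩,
      mem_ball_iff_norm.mpr (hv'ε.trans_le (min_le_right a b))⟩
  exact EReal.coe_le_coe_iff.mpr ((hle τ hτ v' hmem).trans hφw.le)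

theorem upperCurv_preimage_le_of_multiplier {F : Type*} [NormedAddCommGroup F]
    [InnerProductSpace ℝ F] [CompleteSpace E] [CompleteSpace F] {q : E → F} {Q : Set F} {zb : E}
    (hd1 : ∀ᶠ z in 𝓝 zb, DifferentiableAt ℝ q z) (hd2 : DifferentiableAt ℝ (fderiv ℝ q) zb)
    {v lam : E} (horth : ⟪lam, v⟫ = (0 : ℝ)) {μ : F} (hμQ : ∀ d ∈ Q, ⟪μ, d - q zb⟫ ≤ (0 : ℝ))
    (hμ : lam = ContinuousLinearMap.adjoint (fderiv ℝ q zb) μ) :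
    upperCurv (q ⁻¹' Q) lam zb v ≤ ((-(⟪μ, fderiv ℝ (fderiv ℝ q) zb v v⟫ / 2) : ℝ) : EReal) := by
  set A := fderiv ℝ q zb
  set g := fun p : ℝ × E => (p.1 ^ 2)⁻¹ • (q (zb + p.1 • p.2) - q zb - p.1 • A p.2)
  have hg := (tendsto_second_difference_quotient hd1 hd2 v).mono_left
    (prod_mono_left (𝓝 v) (nhdsGT_le_nhdsNE (0 : ℝ)))
  refine upperCurv_le_of_tendsto (φ := fun p => -⟪μ, g p⟫) ?_ fun τ hτ v' hmem => ?_
  · have := ((tendsto_const_nhds (x := μ)).inner (𝕜 := ℝ) hg).neg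
    rwa [real_inner_smul_right, one_div_mul_eq_div] at this
  · have hlam : ⟪lam, v' - v⟫ = ⟪μ, A v'⟫ := by
      rw [inner_sub_right, horth, sub_zero, hμ, ContinuousLinearMap.adjoint_inner_left]
    have hgμ : ⟪μ, g (τ, v')⟫ = (τ ^ 2)⁻¹ * (⟪μ, q (zb + τ • v') - q zb⟫ - τ * ⟪μ, A v'⟫) := by
      simp only [g, real_inner_smul_right, inner_sub_right]
    have hdec : ⟪μ, q (zb + τ • v') - q zb⟫ / τ ^ 2 ≤ 0 :=
      div_nonpos_of_nonpos_of_nonneg (hμQ _ hmem) (by positivity)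
    rw [hlam, hgμ]
    have : -((τ ^ 2)⁻¹ * (⟪μ, q (zb + τ • v') - q zb⟫ - τ * ⟪μ, A v'⟫))
        = ⟪μ, A v'⟫ / τ - ⟪μ, q (zb + τ • v') - q zb⟫ / τ ^ 2 := by
      field_simp; ring
    linarith

end Curvature

theorem upperCurv_le_of_subamenable_general {s p : ℕ}
    (q : EuclideanSpace ℝ (Fin s) → EuclideanSpace ℝ (Fin p))
    (Q : Set (EuclideanSpace ℝ (Fin p)))
    (zb : EuclideanSpace ℝ (Fin s))
    (hd1 : ∀ᶠ z in 𝓝 zb, DifferentiableAt ℝ q z)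
    (hd2 : DifferentiableAt ℝ (fderiv ℝ q) zb)
    (v : EuclideanSpace ℝ (Fin s))
    (lam : EuclideanSpace ℝ (Fin s))
    (horth : ⟪lam, v⟫ = (0 : ℝ)) :
    upperCurv (q ⁻¹' Q) lam zb v ≤
      -((1 / 2 : EReal) *
        sSup {r : EReal | ∃ μ : EuclideanSpace ℝ (Fin p),
          (∀ d ∈ Q, ⟪μ, d - q zb⟫ ≤ (0 : ℝ)) ∧
          lam = (ContinuousLinearMap.adjoint (fderiv ℝ q zb)) μ ∧
          r = ((⟪μ, (fderiv ℝ (fderiv ℝ q) zb v) v⟫ : ℝ) : EReal)}) := by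
  refine EReal.le_neg_half_mul_sSup ?_
  rintro _ ⟨μ, hμQ, hμ, rfl⟩
  calc upperCurv (q ⁻¹' Q) lam zb v
      ≤ ((-(⟪μ, fderiv ℝ (fderiv ℝ q) zb v v⟫ / 2) : ℝ) : EReal) :=
        upperCurv_preimage_le_of_multiplier hd1 hd2 horth hμQ hμ
    _ = -(1 / 2 * ((⟪μ, fderiv ℝ (fderiv ℝ q) zb v v⟫ : ℝ) : EReal)) := by
        rw [show (1 / 2 : EReal) = ((1 / 2 : ℝ) : EReal) by norm_cast, ← EReal.coe_mul,
          ← EReal.coe_neg]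
        ring_nf

/-- upper-curvature estimate for preimages of convex sets under a
twice differentiable map with metrically subregular constraint mapping. -/
theorem upperCurv_le_of_subamenable {s p : ℕ}
    (q : EuclideanSpace ℝ (Fin s) → EuclideanSpace ℝ (Fin p))
    (Q : Set (EuclideanSpace ℝ (Fin p))) (hQc : IsClosed Q) (hQconv : Convex ℝ Q)
    (zb : EuclideanSpace ℝ (Fin s)) (hzb : q zb ∈ Q)
    (hd1 : ∀ᶠ z in 𝓝 zb, DifferentiableAt ℝ q z)
    (hd2 : DifferentiableAt ℝ (fderiv ℝ q) zb)
    (κ : ℝ) (hκ : 0 ≤ κ)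
    (hsubreg : ∀ᶠ z in 𝓝 zb,
      Metric.infDist z (q ⁻¹' Q) ≤ κ * Metric.infDist (q z) Q)
    (v : EuclideanSpace ℝ (Fin s)) (hv : v ∈ contTangent (q ⁻¹' Q) zb)
    (lam : EuclideanSpace ℝ (Fin s)) (hlam : lam ∈ limNormal (q ⁻¹' Q) zb)
    (horth : ⟪lam, v⟫ = (0 : ℝ)) :
    upperCurv (q ⁻¹' Q) lam zb v ≤
      -((1 / 2 : EReal) *
        sSup {r : EReal | ∃ μ : EuclideanSpace ℝ (Fin p),
          (∀ d ∈ Q, ⟪μ, d - q zb⟫ ≤ (0 : ℝ)) ∧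
          lam = (ContinuousLinearMap.adjoint (fderiv ℝ q zb)) μ ∧
          r = ((⟪μ, (fderiv ℝ (fderiv ℝ q) zb v) v⟫ : ℝ) : EReal)}) :=
  upperCurv_le_of_subamenable_general q Q zb hd1 hd2 v lam horth
end

section
/- Let C ⊂ ℝˡ be the union of finitely many convex polyhedra C₁,…,C_m, let ȳ ∈ C, and let w ∈ T_C(ȳ) (the contingent cone). Then there exists t̄ > 0 such that ȳ + tw ∈ C for all t ∈ [0, t̄]. -/
open Filter Topology
open scoped RealInnerProductSpace

/-- A convex polyhedron: a finite intersection of closed half-spaces. -/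
def IsPolyhedron {E : Type*} [NormedAddCommGroup E] [InnerProductSpace ℝ E]
    (S : Set E) : Prop :=
  ∃ (r : ℕ) (a : Fin r → E) (b : Fin r → ℝ), S = {x | ∀ j, ⟪a j, x⟫ ≤ b j}

/-- for a union of finitely many convex polyhedra, tangent directions
are feasible directions. -/
theorem tangent_direction_feasible_for_union_of_polyhedra {l m : ℕ}
    (Ci : Fin m → Set (EuclideanSpace ℝ (Fin l)))
    (hpoly : ∀ i, IsPolyhedron (Ci i))
    (C : Set (EuclideanSpace ℝ (Fin l))) (hC : C = ⋃ i, Ci i)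
    (yb : EuclideanSpace ℝ (Fin l)) (hyb : yb ∈ C)
    (w : EuclideanSpace ℝ (Fin l)) (hw : w ∈ contTangent C yb) :
    ∃ tb > (0 : ℝ), ∀ t ∈ Set.Icc (0 : ℝ) tb, yb + t • w ∈ C := by
  obtain ⟨t, wseq, ht, htlim, hwlim, hmem⟩ := hw
  -- pigeonhole: some polyhedron contains infinitely many of the points
  have hfreq : ∃ i, ∃ᶠ k in atTop, yb + t k • wseq k ∈ Ci i := by
    by_contra h
    push_neg at h
    have hall : ∀ᶠ k in atTop, ∀ i, yb + t k • wseq k ∉ Ci i :=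
      Filter.eventually_all.2 h
    obtain ⟨k, hk⟩ := hall.exists
    have hmk := hmem k
    rw [hC, Set.mem_iUnion] at hmk
    obtain ⟨i, hi⟩ := hmk
    exact hk i hi
  obtain ⟨i, hfreq⟩ := hfreq
  obtain ⟨φ, hφ, hφmem⟩ := Filter.extraction_of_frequently_atTop hfreq
  have hφtop : Tendsto φ atTop atTop := hφ.tendsto_atTop
  have htlim' : Tendsto (t ∘ φ) atTop (𝓝 0) := htlim.comp hφtop
  have hwlim' : Tendsto (wseq ∘ φ) atTop (𝓝 w) := hwlim.comp hφtop
  obtain ⟨r, a, b, hS⟩ := hpoly i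
  have hinner : ∀ j n, ⟪a j, yb⟫ + t (φ n) * ⟪a j, wseq (φ n)⟫ ≤ b j := by
    intro j n
    have h1 := hφmem n
    rw [hS] at h1
    have h2 := h1 j
    simpa [inner_add_right, inner_smul_right] using h2
  have hwinner : ∀ j, Tendsto (fun n => ⟪a j, wseq (φ n)⟫) atTop (𝓝 ⟪a j, w⟫) :=
    fun j => (Tendsto.inner tendsto_const_nhds hwlim')
  have hyb_le : ∀ j, ⟪a j, yb⟫ ≤ b j := by
    intro j
    have hlim : Tendsto (fun n => ⟪a j, yb⟫ + t (φ n) * ⟪a j, wseq (φ n)⟫) atTop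
        (𝓝 (⟪a j, yb⟫ + 0 * ⟪a j, w⟫)) :=
      tendsto_const_nhds.add (htlim'.mul (hwinner j))
    have := le_of_tendsto hlim (Filter.Eventually.of_forall (hinner j))
    simpa using this
  have hactive : ∀ j, ⟪a j, yb⟫ = b j → ⟪a j, w⟫ ≤ 0 := by
    intro j hj
    have hn : ∀ n, ⟪a j, wseq (φ n)⟫ ≤ 0 := by
      intro n
      have h1 := hinner j n
      have h2 : t (φ n) * ⟪a j, wseq (φ n)⟫ ≤ 0 := by linarith [hj ▸ h1]
      nlinarith [ht (φ n)]
    exact le_of_tendsto (hwinner j) (Filter.Eventually.of_forall hn)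
  have hball : ∀ j, ∃ s > (0:ℝ), ∀ u ∈ Set.Icc (0:ℝ) s,
      ⟪a j, yb⟫ + u * ⟪a j, w⟫ ≤ b j := by
    intro j
    by_cases hc : ⟪a j, w⟫ ≤ 0
    · exact ⟨1, one_pos, fun u hu => by nlinarith [hyb_le j, hu.1]⟩
    · push_neg at hc
      have hlt : ⟪a j, yb⟫ < b j :=
        lt_of_le_of_ne (hyb_le j) (fun h => absurd (hactive j h) (not_le.2 hc))
      refine ⟨(b j - ⟪a j, yb⟫) / ⟪a j, w⟫, div_pos (by linarith) hc, fun u hu => ?_⟩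
      have h2 := hu.2
      rw [le_div_iff₀ hc] at h2
      nlinarith [hu.1]
  choose s hs hsle using hball
  by_cases hr : r = 0
  · refine ⟨1, one_pos, fun u _ => ?_⟩
    rw [hC]
    refine Set.mem_iUnion.2 ⟨i, ?_⟩
    rw [hS]
    intro j
    exact absurd j.isLt (by omega)
  · have hne : Nonempty (Fin r) := ⟨⟨0, Nat.pos_of_ne_zero hr⟩⟩
    refine ⟨Finset.univ.inf' Finset.univ_nonempty s, ?_, fun u hu => ?_⟩
    · exact (Finset.lt_inf'_iff _).2 fun j _ => hs j
    · rw [hC]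
      refine Set.mem_iUnion.2 ⟨i, ?_⟩
      rw [hS]
      intro j
      have hle : u ≤ s j := le_trans hu.2 (Finset.inf'_le _ (Finset.mem_univ j))
      have := hsle j u ⟨hu.1, hle⟩
      simpa [inner_add_right, inner_smul_right] using this
end

section
/- Let C ⊂ ℝˡ be the union of finitely many convex polyhedra and ȳ ∈ C. Then T_C(ȳ) = ⋃_{i : ȳ ∈ C_i} T_{C_i}(ȳ), where T_{C_i}(ȳ) is the (convex) tangent cone to the polyhedron C_i at ȳ. -/
open Filter Topology
open scoped RealInnerProductSpace

lemma IsPolyhedron.isClosed {E : Type*} [NormedAddCommGroup E] [InnerProductSpace ℝ E]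
    {S : Set E} (h : IsPolyhedron S) : IsClosed S := by
  obtain ⟨r, a, b, rfl⟩ := h
  have : {x : E | ∀ j, ⟪a j, x⟫ ≤ b j} = ⋂ j, {x | ⟪a j, x⟫ ≤ b j} := by
    ext x; simp
  rw [this]
  exact isClosed_iInter fun j =>
    isClosed_le (Continuous.inner continuous_const continuous_id) continuous_const

/-- the contingent cone to a finite union of convex polyhedra is
the union of the tangent cones to the polyhedra containing the point. -/
theorem contTangent_union_of_polyhedra {l m : ℕ}
    (Ci : Fin m → Set (EuclideanSpace ℝ (Fin l)))
    (hpoly : ∀ i, IsPolyhedron (Ci i))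
    (C : Set (EuclideanSpace ℝ (Fin l))) (hC : C = ⋃ i, Ci i)
    (yb : EuclideanSpace ℝ (Fin l)) (hyb : yb ∈ C) :
    contTangent C yb = ⋃ i ∈ {i : Fin m | yb ∈ Ci i}, contTangent (Ci i) yb := by
  subst hC
  ext u
  constructor
  · rintro ⟨t, w, ht, ht0, hw, hmem⟩
    -- pigeonhole: some i has infinitely many k with yb + t k • w k ∈ Ci i
    have hinf : ∃ i, {k : ℕ | yb + t k • w k ∈ Ci i}.Infinite := by
      by_contra h
      push_neg at h
      have : (⋃ i, {k : ℕ | yb + t k • w k ∈ Ci i}).Finite :=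
        Set.finite_iUnion h
      have huniv : (Set.univ : Set ℕ) ⊆ ⋃ i, {k : ℕ | yb + t k • w k ∈ Ci i} := by
        intro k _
        obtain ⟨s, ⟨i, rfl⟩, hs⟩ := hmem k
        exact Set.mem_iUnion.mpr ⟨i, hs⟩
      exact Set.infinite_univ (this.subset huniv)
    obtain ⟨i, hi⟩ := hinf
    set p : ℕ → Prop := fun k => yb + t k • w k ∈ Ci i with hp
    have hip : (setOf p).Infinite := hi
    set φ := Nat.nth p
    have hφmono : StrictMono φ := Nat.nth_strictMono hip
    have hφmem : ∀ n, yb + t (φ n) • w (φ n) ∈ Ci i := fun n =>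
      Nat.nth_mem_of_infinite hip n
    have htφ : Tendsto (t ∘ φ) atTop (𝓝 0) := ht0.comp hφmono.tendsto_atTop
    have hwφ : Tendsto (w ∘ φ) atTop (𝓝 u) := hw.comp hφmono.tendsto_atTop
    -- yb ∈ Ci i
    have hlim : Tendsto (fun n => yb + t (φ n) • w (φ n)) atTop (𝓝 yb) := by
      have : Tendsto (fun n => t (φ n) • w (φ n)) atTop (𝓝 ((0:ℝ) • u)) :=
        htφ.smul hwφ
      rw [zero_smul] at this
      simpa using tendsto_const_nhds.add this
    have hybCi : yb ∈ Ci i :=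
      (hpoly i).isClosed.mem_of_tendsto hlim (Eventually.of_forall hφmem)
    refine Set.mem_biUnion hybCi ?_
    exact ⟨t ∘ φ, w ∘ φ, fun k => ht (φ k), htφ, hwφ, hφmem⟩
  · rintro ⟨s, ⟨i, rfl⟩, hs⟩
    simp only [Set.mem_iUnion, Set.mem_setOf_eq] at hs
    obtain ⟨hyi, t, w, ht, ht0, hw, hmem⟩ := hs
    exact ⟨t, w, ht, ht0, hw, fun k => Set.mem_iUnion.mpr ⟨i, hmem k⟩⟩
end

section
/- Let C ⊂ ℝˡ be closed convex, ȳ ∈ C, and w ∈ T_C(ȳ) (tangent cone of the convex set). Then for λ ∈ ℝˡ, the inclusion λ ∈ N_C(ȳ; w) (directional limiting normal cone) holds if and only if λ ∈ N_C(ȳ) and ⟨λ, w⟩ = 0. -/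
open Filter Topology
open scoped RealInnerProductSpace

/-- The directional limiting normal cone in direction `w`. -/
def dirLimNormal {E : Type*} [NormedAddCommGroup E] [InnerProductSpace ℝ E]
    (Ω : Set E) (z w : E) : Set E :=
  {lam | ∃ (t : ℕ → ℝ) (ws lams : ℕ → E), (∀ k, 0 < t k) ∧
    Tendsto t atTop (𝓝 0) ∧ Tendsto ws atTop (𝓝 w) ∧ Tendsto lams atTop (𝓝 lam) ∧
    ∀ k, z + t k • ws k ∈ Ω ∧ lams k ∈ regNormal Ω (z + t k • ws k)}

/-! Normal cones of a convex set have closed graph, so a directional limiting normal `λ` is a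
normal at `ȳ`; testing the normal inequality at `ȳ + tₖ wₖ` against `ȳ` gives `⟪λₖ, wₖ⟫ ≥ 0`,
while `⟪λ, w⟫ ≤ 0` for every tangent `w`.

Conversely, let `ȳ + tₖ uₖ ∈ C` with `uₖ → w` and project `ȳ + tₖ uₖ + tₖ δₖ λ` onto `C`. The
residual divided by `tₖ δₖ` is a normal `μₖ` at the projection with `‖μₖ‖ ≤ ‖λ‖`, and the normal
inequality for `λ` at `ȳ` yields `δₖ ‖μₖ - λ‖² ≤ -2 ⟪λ, uₖ⟫ → 0`. Letting `δₖ → 0` slowly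
enough forces `μₖ → λ`, while the projections still approach `ȳ` along `w`. -/

lemma exists_pos_tendsto_zero_div {a : ℕ → ℝ} (ha0 : ∀ k, 0 ≤ a k)
    (ha : Tendsto a atTop (𝓝 0)) :
    ∃ δ : ℕ → ℝ, (∀ k, 0 < δ k) ∧ Tendsto δ atTop (𝓝 0) ∧
      Tendsto (fun k => a k / δ k) atTop (𝓝 0) := by
  have hpos : ∀ k : ℕ, 0 < a k + 1 / (k + 1) := fun k =>
    add_pos_of_nonneg_of_pos (ha0 k) Nat.one_div_pos_of_nat
  have hδ : Tendsto (fun k : ℕ => √(a k + 1 / (k + 1))) atTop (𝓝 0) := by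
    simpa using (ha.add tendsto_one_div_add_atTop_nhds_zero_nat).sqrt
  refine ⟨_, fun k => Real.sqrt_pos.mpr (hpos k), hδ,
    squeeze_zero (fun k => div_nonneg (ha0 k) (Real.sqrt_nonneg _)) (fun k => ?_) hδ⟩
  rw [div_le_iff₀ (Real.sqrt_pos.mpr (hpos k)), ← sq, Real.sq_sqrt (hpos k).le]
  exact le_add_of_nonneg_right Nat.one_div_pos_of_nat.le

section ConvexNormal

variable {E : Type*} [NormedAddCommGroup E] [InnerProductSpace ℝ E] {C : Set E} {z : E}

lemma sub_mem_contTangent_of_convex (hconv : Convex ℝ C) (hz : z ∈ C) {c : E} (hc : c ∈ C) :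
    c - z ∈ contTangent C z := by
  refine ⟨fun k => (1 / 2) ^ k, fun _ => c - z, fun k => by positivity,
    tendsto_pow_atTop_nhds_zero_of_lt_one (by norm_num) (by norm_num),
    tendsto_const_nhds, fun k => ?_⟩
  have ht1 : ((1 : ℝ) / 2) ^ k ≤ 1 := pow_le_one₀ (by norm_num) (by norm_num)
  convert hconv hz hc (sub_nonneg.mpr ht1) (by positivity) (sub_add_cancel 1 _) using 1
  module

lemma inner_nonpos_of_mem_contTangent {v u : E} (hv : ∀ c ∈ C, ⟪v, c - z⟫ ≤ (0 : ℝ))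
    (hu : u ∈ contTangent C z) : ⟪v, u⟫ ≤ (0 : ℝ) := by
  obtain ⟨t, us, ht, -, hus, hmem⟩ := hu
  have hnonpos : ∀ k, ⟪v, us k⟫ ≤ (0 : ℝ) := fun k => by
    have := hv _ (hmem k)
    rw [add_sub_cancel_left, real_inner_smul_right] at this
    exact nonpos_of_mul_nonpos_right this (ht k)
  exact le_of_tendsto (tendsto_const_nhds.inner hus) (Eventually.of_forall hnonpos)

lemma mem_regNormal_iff_of_convex (hconv : Convex ℝ C) (hz : z ∈ C) {v : E} :
    v ∈ regNormal C z ↔ ∀ c ∈ C, ⟪v, c - z⟫ ≤ (0 : ℝ) :=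
  ⟨fun hv _ hc => hv _ (sub_mem_contTangent_of_convex hconv hz hc),
    fun hv _ hu => inner_nonpos_of_mem_contTangent hv hu⟩

lemma inner_sub_nonpos_of_mem_dirLimNormal (hconv : Convex ℝ C) {w ν : E}
    (hν : ν ∈ dirLimNormal C z w) {c : E} (hc : c ∈ C) : ⟪ν, c - z⟫ ≤ (0 : ℝ) := by
  obtain ⟨t, ws, νs, -, ht0, hws, hνs, hmem⟩ := hν
  have hy : Tendsto (fun k => z + t k • ws k) atTop (𝓝 z) := by
    simpa using tendsto_const_nhds.add (ht0.smul hws)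
  refine le_of_tendsto (hνs.inner (tendsto_const_nhds.sub hy)) (Eventually.of_forall fun k => ?_)
  exact (mem_regNormal_iff_of_convex hconv (hmem k).1).mp (hmem k).2 c hc

lemma inner_nonneg_of_mem_dirLimNormal (hconv : Convex ℝ C) (hz : z ∈ C) {w ν : E}
    (hν : ν ∈ dirLimNormal C z w) : (0 : ℝ) ≤ ⟪ν, w⟫ := by
  obtain ⟨t, ws, νs, ht, -, hws, hνs, hmem⟩ := hν
  refine ge_of_tendsto (hνs.inner hws) (Eventually.of_forall fun k => ?_)
  have := (mem_regNormal_iff_of_convex hconv (hmem k).1).mp (hmem k).2 z hz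
  rw [sub_add_cancel_left, inner_neg_right, real_inner_smul_right, neg_nonpos] at this
  exact nonneg_of_mul_nonneg_right this (ht k)

lemma exists_proj_of_isClosed [CompleteSpace E] (hC : IsClosed C) (hconv : Convex ℝ C)
    {q : E} (hq : q ∈ C) (x : E) :
    ∃ y ∈ C, (∀ c ∈ C, ⟪x - y, c - y⟫ ≤ (0 : ℝ)) ∧ ‖x - y‖ ≤ ‖x - q‖ := by
  obtain ⟨y, hyC, hy⟩ := exists_norm_eq_iInf_of_complete_convex ⟨q, hq⟩ hC.isComplete hconv x
  refine ⟨y, hyC, (norm_eq_iInf_iff_real_inner_le_zero hconv hyC).mp hy, ?_⟩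
  rw [hy]
  exact ciInf_le ⟨0, by rintro b ⟨i, rfl⟩; exact norm_nonneg _⟩ (⟨q, hq⟩ : C)

/-- `z + s • (v - μ)` is the nearest point of `C` to `z + s • v`. -/
lemma exists_normal_norm_le [CompleteSpace E] (hC : IsClosed C) (hconv : Convex ℝ C)
    (hz : z ∈ C) (v : E) {s : ℝ} (hs : 0 < s) :
    ∃ μ : E, ‖μ‖ ≤ ‖v‖ ∧ z + s • (v - μ) ∈ C ∧
      ∀ c ∈ C, ⟪μ, c - (z + s • (v - μ))⟫ ≤ (0 : ℝ) := by
  obtain ⟨y, hyC, hyN, hyd⟩ := exists_proj_of_isClosed hC hconv hz (z + s • v)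
  have hy : z + s • (v - s⁻¹ • (z + s • v - y)) = y := by
    rw [smul_sub, smul_inv_smul₀ hs.ne']
    abel
  refine ⟨s⁻¹ • (z + s • v - y), ?_, by rw [hy]; exact hyC, fun c hc => ?_⟩
  · rw [norm_smul, Real.norm_of_nonneg (inv_nonneg.mpr hs.le), inv_mul_le_iff₀ hs]
    simpa [norm_smul, abs_of_pos hs] using hyd
  · rw [hy, real_inner_smul_left]
    exact mul_nonpos_of_nonneg_of_nonpos (inv_nonneg.mpr hs.le) (hyN c hc)

lemma norm_sub_sq_le_two_inner_of_norm_le {μ v : E} (h : ‖μ‖ ≤ ‖v‖) :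
    ‖μ - v‖ ^ 2 ≤ 2 * ⟪v, v - μ⟫ := by
  rw [norm_sub_sq_real, inner_sub_right, real_inner_self_eq_norm_sq, real_inner_comm]
  nlinarith [norm_nonneg μ]

lemma mem_dirLimNormal_of_inner_eq_zero [CompleteSpace E] {w ν : E}
    (hC : IsClosed C) (hconv : Convex ℝ C) (hw : w ∈ contTangent C z)
    (hν : ∀ c ∈ C, ⟪ν, c - z⟫ ≤ (0 : ℝ)) (hperp : ⟪ν, w⟫ = (0 : ℝ)) :
    ν ∈ dirLimNormal C z w := by
  obtain ⟨t, u, ht, ht0, hu, huC⟩ := hw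
  have ha0 : ∀ k, 0 ≤ -⟪ν, u k⟫ := fun k => by
    have := hν _ (huC k)
    rw [add_sub_cancel_left, real_inner_smul_right] at this
    exact neg_nonneg.mpr (nonpos_of_mul_nonpos_right this (ht k))
  have ha : Tendsto (fun k => -⟪ν, u k⟫) atTop (𝓝 0) := by
    have : Tendsto (fun k => ⟪ν, u k⟫) atTop (𝓝 ⟪ν, w⟫) := tendsto_const_nhds.inner hu
    simpa [hperp] using this.neg
  obtain ⟨δ, hδpos, hδ, haδ⟩ := exists_pos_tendsto_zero_div ha0 ha
  choose μ hμν hμC hμN using fun k =>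
    exists_normal_norm_le hC hconv (huC k) ν (mul_pos (ht k) (hδpos k))
  have hy : ∀ k, z + t k • u k + (t k * δ k) • (ν - μ k) = z + t k • (u k + δ k • (ν - μ k)) :=
    fun k => by module
  have hest : ∀ k, ‖μ k - ν‖ ^ 2 ≤ 2 * (-⟪ν, u k⟫ / δ k) := fun k => by
    have hyν := hν _ (hμC k)
    rw [hy, add_sub_cancel_left, real_inner_smul_right, inner_add_right,
      real_inner_smul_right] at hyν
    have := nonpos_of_mul_nonpos_right hyν (ht k)
    calc ‖μ k - ν‖ ^ 2 ≤ 2 * ⟪ν, ν - μ k⟫ := norm_sub_sq_le_two_inner_of_norm_le (hμν k)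
      _ ≤ 2 * (-⟪ν, u k⟫ / δ k) := by
        gcongr
        rw [le_div_iff₀ (hδpos k)]
        linarith
  have hμ : Tendsto μ atTop (𝓝 ν) := by
    rw [tendsto_iff_norm_sub_tendsto_zero]
    have := (squeeze_zero (fun k => sq_nonneg _) hest (by simpa using haδ.const_mul 2)).sqrt
    simpa [Real.sqrt_sq (norm_nonneg _)] using this
  refine ⟨t, fun k => u k + δ k • (ν - μ k), μ, ht, ht0, ?_, hμ, fun k => ?_⟩
  · simpa using hu.add (hδ.smul (tendsto_const_nhds.sub hμ))
  · rw [← hy]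
    exact ⟨hμC k, (mem_regNormal_iff_of_convex hconv (hμC k)).mpr (hμN k)⟩

end ConvexNormal

/-- for a closed convex set, directional limiting normals in a
tangent direction `w` are exactly the normals orthogonal to `w`. -/
theorem dirLimNormal_convex_char {l : ℕ}
    (C : Set (EuclideanSpace ℝ (Fin l))) (hCc : IsClosed C) (hCconv : Convex ℝ C)
    (yb : EuclideanSpace ℝ (Fin l)) (hyb : yb ∈ C)
    (w : EuclideanSpace ℝ (Fin l)) (hw : w ∈ contTangent C yb)
    (lam : EuclideanSpace ℝ (Fin l)) :
    lam ∈ dirLimNormal C yb w ↔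
      ((∀ c ∈ C, ⟪lam, c - yb⟫ ≤ (0 : ℝ)) ∧ ⟪lam, w⟫ = (0 : ℝ)) := by
  refine ⟨fun h => ?_, fun ⟨hN, hperp⟩ => mem_dirLimNormal_of_inner_eq_zero hCc hCconv hw hN hperp⟩
  have hN : ∀ c ∈ C, ⟪lam, c - yb⟫ ≤ (0 : ℝ) := fun c hc =>
    inner_sub_nonpos_of_mem_dirLimNormal hCconv h hc
  exact ⟨hN, le_antisymm (inner_nonpos_of_mem_contTangent hN hw)
    (inner_nonneg_of_mem_dirLimNormal hCconv hyb h)⟩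
end

section
/- Let Q ⊂ ℝᵖ be a convex polyhedron Q = {d : ⟨a_j, d⟩ ≤ b_j, j = 1,…,r}. Then there exists a constant β ≥ 0 such that for every d ∈ Q and every μ ∈ N_Q(d) (convex normal cone) there exist coefficients ν_j ≥ 0, j ∈ J(d) := {j : ⟨a_j,d⟩ = b_j}, with μ = Σ_{j∈J(d)} ν_j a_j and Σ_{j∈J(d)} ν_j ≤ β‖μ‖. -/
/-!
By Farkas' lemma, a normal `μ` to the polyhedron at `d` lies in the cone generated by the active
constraint vectors: otherwise a separating direction `y` would be a feasible direction at `d` along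
which `⟪μ, ·⟫` increases. This cone is closed because, by the conic Carathéodory theorem, it is the
finite union of the cones over linearly independent subfamilies, each the image of an orthant
under an injective linear map. Carathéodory also lets us take the coefficients of `μ` supported on a
linearly independent set of active vectors; on such a set the coefficients depend linearly and
injectively on `μ`, so their sum is at most `C ‖μ‖`, and `β` is the largest of these finitely many
constants `C`.
-/

open Function
open scoped RealInnerProductSpace

section ConicHull

variable {𝕜 M ι : Type*} [Fintype ι]

theorem linearIndepOn_iff_of_fintype [Ring 𝕜] [AddCommGroup M] [Module 𝕜 M]
    {v : ι → M} {s : Set ι} :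
    LinearIndepOn 𝕜 v s ↔ ∀ g : ι → 𝕜, support g ⊆ s → ∑ i, g i • v i = 0 → g = 0 := by
  classical
  rw [linearIndepOn_iff'']
  refine ⟨fun h g hgs hg0 => funext fun i => ?_, fun h t g hts hgt hg0 i _ => ?_⟩
  · by_contra hi
    refine hi (h s.toFinset g (by simp) (fun j hj => ?_) ?_ i (by simpa using hgs hi))
    · simpa using mt (@hgs j) (by simpa using hj)
    · rwa [Finset.sum_subset (Finset.subset_univ _) fun j _ hj => ?_]
      simp [show g j = 0 by simpa using mt (@hgs j) (by simpa using hj)]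
  · have hsupp : support g ⊆ t := fun j hj => by_contra fun hjt => hj (hgt j hjt)
    refine congr_fun (h g (hsupp.trans hts) ?_) i
    rwa [← Finset.sum_subset (Finset.subset_univ t) fun j _ hj => by simp [hgt j hj]]

variable [Field 𝕜] [LinearOrder 𝕜] [IsStrictOrderedRing 𝕜] [AddCommGroup M] [Module 𝕜 M]

theorem exists_sub_smul_nonneg_support_ssubset {ν c : ι → 𝕜} (hν : 0 ≤ ν)
    (hc : support c ⊆ support ν) (hpos : ∃ i, 0 < c i) :
    ∃ t : 𝕜, 0 ≤ ν - t • c ∧ support (ν - t • c) ⊂ support ν := by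
  classical
  obtain ⟨i, hi⟩ := hpos
  obtain ⟨j, hj, hmin⟩ := Finset.exists_min_image {i | 0 < c i} (fun i => ν i / c i)
    ⟨i, by simpa using hi⟩
  simp only [Finset.mem_filter, Finset.mem_univ, true_and] at hj hmin
  have hle : ∀ i, ν j / c j * c i ≤ ν i := fun i => by
    rcases lt_or_ge 0 (c i) with hci | hci
    · exact (le_div_iff₀ hci).mp (hmin i hci)
    · exact (mul_nonpos_of_nonneg_of_nonpos (div_nonneg (hν j) hj.le) hci).trans (hν i)
  refine ⟨ν j / c j, fun i => by simpa using hle i, ?_⟩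
  rw [Set.ssubset_iff_of_subset]
  · exact ⟨j, hc hj.ne', by simp [div_mul_cancel₀ _ hj.ne']⟩
  · intro i hi
    by_contra hνi
    have hci : c i = 0 := by_contra fun h => hνi (hc h)
    exact hi (by simp [hci, show ν i = 0 from not_not.mp hνi])

theorem exists_pos_relation_of_not_linearIndepOn {v : ι → M} {s : Set ι}
    (h : ¬LinearIndepOn 𝕜 v s) :
    ∃ c : ι → 𝕜, support c ⊆ s ∧ ∑ i, c i • v i = 0 ∧ ∃ i, 0 < c i := by
  simp only [linearIndepOn_iff_of_fintype, not_forall] at h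
  obtain ⟨g, hgs, hg0, hg⟩ := h
  obtain ⟨i, hi⟩ : ∃ i, g i ≠ 0 := by simpa [funext_iff] using hg
  rcases hi.lt_or_gt with hneg | hpos
  · refine ⟨-g, by rwa [support_neg], by simp [hg0], i, by simpa using hneg⟩
  · exact ⟨g, hgs, hg0, i, hpos⟩

theorem exists_nonneg_linearIndepOn_sum_smul_eq (v : ι → M) {ν : ι → 𝕜} (hν : 0 ≤ ν) :
    ∃ ν' : ι → 𝕜, 0 ≤ ν' ∧ support ν' ⊆ support ν ∧ LinearIndepOn 𝕜 v (support ν') ∧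
      ∑ i, ν' i • v i = ∑ i, ν i • v i := by
  induction hs : support ν using WellFoundedLT.induction generalizing ν with
  | _ s ih =>
  subst hs
  by_cases hind : LinearIndepOn 𝕜 v (support ν)
  · exact ⟨ν, hν, subset_rfl, hind, rfl⟩
  obtain ⟨c, hcs, hc0, hpos⟩ := exists_pos_relation_of_not_linearIndepOn hind
  obtain ⟨t, hνt, hlt⟩ := exists_sub_smul_nonneg_support_ssubset hν hcs hpos
  obtain ⟨ν', hν', hsupp, hind', hsum⟩ := ih _ hlt hνt rfl
  refine ⟨ν', hν', hsupp.trans hlt.subset, hind', hsum.trans ?_⟩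
  simp [sub_smul, Finset.sum_sub_distrib, mul_smul, ← Finset.smul_sum, hc0]

variable (𝕜) in
/-- The cone `PointedCone.hull 𝕜 (v '' s)`, described through coefficient vectors on `ι`
supported in `s`. -/
def conicHullOn (v : ι → M) (s : Set ι) : PointedCone 𝕜 M where
  carrier := {x | ∃ ν : ι → 𝕜, 0 ≤ ν ∧ support ν ⊆ s ∧ ∑ i, ν i • v i = x}
  zero_mem' := ⟨0, le_rfl, by simp, by simp⟩
  add_mem' := by
    rintro _ _ ⟨ν, hν, hνs, rfl⟩ ⟨ν', hν', hν's, rfl⟩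
    refine ⟨ν + ν', add_nonneg hν hν', (support_add _ _).trans (Set.union_subset hνs hν's), ?_⟩
    simp [add_smul, Finset.sum_add_distrib]
  smul_mem' := by
    rintro ⟨c, hc⟩ _ ⟨ν, hν, hνs, rfl⟩
    refine ⟨c • ν, smul_nonneg hc hν, (support_const_smul_subset c ν).trans hνs, ?_⟩
    simp [Finset.smul_sum, mul_smul]

theorem apply_mem_conicHullOn {v : ι → M} {s : Set ι} {j : ι}
    (hj : j ∈ s) : v j ∈ conicHullOn 𝕜 v s := by
  classical
  refine ⟨Pi.single j 1, ?_, (Pi.support_single_subset).trans (by simpa using hj), by simp⟩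
  intro i
  by_cases h : i = j <;> simp [h]

end ConicHull

section Normed

theorem mem_pi_compl_bot_iff_support_subset {R ι : Type*} [Semiring R] {s : Set ι} {g : ι → R} :
    g ∈ Submodule.pi sᶜ (fun _ => (⊥ : Submodule R R)) ↔ support g ⊆ s := by
  rw [support_subset_iff']
  simp

variable {ι E : Type*} [Fintype ι] [NormedAddCommGroup E] [NormedSpace ℝ E]
  {v : ι → E} {s : Set ι}

theorem LinearIndepOn.injective_linearCombination_domRestrict (h : LinearIndepOn ℝ v s) :
    Injective ((Fintype.linearCombination ℝ v).domRestrict (Submodule.pi sᶜ fun _ => ⊥)) := by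
  rw [← LinearMap.ker_eq_bot, LinearMap.ker_eq_bot']
  rintro ⟨g, hg⟩ hg0
  refine Subtype.ext (linearIndepOn_iff_of_fintype.mp h g
    (mem_pi_compl_bot_iff_support_subset.mp hg) ?_)
  simpa [Fintype.linearCombination_apply] using hg0

theorem LinearIndepOn.exists_sum_abs_le_mul_norm (h : LinearIndepOn ℝ v s) :
    ∃ C, 0 ≤ C ∧ ∀ g : ι → ℝ, support g ⊆ s → ∑ i, |g i| ≤ C * ‖∑ i, g i • v i‖ := by
  obtain ⟨K, -, hK⟩ := LinearMap.exists_antilipschitzWith _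
    (LinearMap.ker_eq_bot.mpr h.injective_linearCombination_domRestrict)
  refine ⟨Fintype.card ι * K, by positivity, fun g hgs => ?_⟩
  have := ZeroHomClass.bound_of_antilipschitz _ hK
    ⟨g, mem_pi_compl_bot_iff_support_subset.mpr hgs⟩
  calc ∑ i, |g i| ≤ Fintype.card ι * ‖g‖ := by
        simpa using Finset.sum_le_card_nsmul Finset.univ _ _ fun i _ => norm_le_pi_norm g i
    _ ≤ Fintype.card ι * (K * ‖∑ i, g i • v i‖) := by
        gcongr
        simpa [Fintype.linearCombination_apply] using this
    _ = _ := by ring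

theorem LinearIndepOn.isClosed_conicHullOn (h : LinearIndepOn ℝ v s) :
    IsClosed (conicHullOn ℝ v s : Set E) := by
  have hcone : (conicHullOn ℝ v s : Set E) =
      (Fintype.linearCombination ℝ v).domRestrict (Submodule.pi sᶜ fun _ => ⊥) ''
        {g | 0 ≤ (g : ι → ℝ)} := by
    ext x
    constructor
    · rintro ⟨g, hg, hgs, rfl⟩
      exact ⟨⟨g, mem_pi_compl_bot_iff_support_subset.mpr hgs⟩, hg,
        Fintype.linearCombination_apply ℝ v g⟩
    · rintro ⟨⟨g, hgs⟩, hg, rfl⟩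
      exact ⟨g, hg, mem_pi_compl_bot_iff_support_subset.mp hgs,
        (Fintype.linearCombination_apply ℝ v g).symm⟩
  rw [hcone]
  exact (LinearMap.isClosedEmbedding_of_injective (LinearMap.ker_eq_bot.mpr
    h.injective_linearCombination_domRestrict)).isClosedMap _
    (isClosed_Ici.preimage continuous_subtype_val)

theorem isClosed_conicHullOn (v : ι → E) (s : Set ι) : IsClosed (conicHullOn ℝ v s : Set E) := by
  have hunion : (conicHullOn ℝ v s : Set E) =
      ⋃ (t : Set ι) (_ : t ⊆ s ∧ LinearIndepOn ℝ v t), conicHullOn ℝ v t := by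
    ext x
    simp only [Set.mem_iUnion, SetLike.mem_coe]
    constructor
    · rintro ⟨ν, hν, hνs, rfl⟩
      obtain ⟨ν', hν', hsupp, hind, hsum⟩ := exists_nonneg_linearIndepOn_sum_smul_eq v hν
      exact ⟨support ν', ⟨hsupp.trans hνs, hind⟩, ν', hν', subset_rfl, hsum⟩
    · rintro ⟨t, ⟨hts, -⟩, ν, hν, hνt, rfl⟩
      exact ⟨ν, hν, hνt.trans hts, rfl⟩
  rw [hunion]
  exact isClosed_iUnion_of_finite fun t =>
    isClosed_iUnion_of_finite fun ht => ht.2.isClosed_conicHullOn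

theorem exists_uniform_sum_abs_le_mul_norm (v : ι → E) :
    ∃ β, 0 ≤ β ∧ ∀ g : ι → ℝ, LinearIndepOn ℝ v (support g) →
      ∑ i, |g i| ≤ β * ‖∑ i, g i • v i‖ := by
  have hlocal : ∀ s : Set ι, ∃ C, 0 ≤ C ∧ (LinearIndepOn ℝ v s →
      ∀ g : ι → ℝ, support g ⊆ s → ∑ i, |g i| ≤ C * ‖∑ i, g i • v i‖) := by
    intro s
    by_cases h : LinearIndepOn ℝ v s
    · obtain ⟨C, hC, hbound⟩ := h.exists_sum_abs_le_mul_norm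
      exact ⟨C, hC, fun _ => hbound⟩
    · exact ⟨0, le_rfl, fun h' => absurd h' h⟩
  choose C hC hbound using hlocal
  obtain ⟨s₀, hs₀⟩ := Finite.exists_max C
  refine ⟨C s₀, hC s₀, fun g hg => (hbound _ hg g subset_rfl).trans ?_⟩
  gcongr
  exact hs₀ _

end Normed

section Polyhedron

open Filter Topology

variable {ι E : Type*} [Fintype ι] [NormedAddCommGroup E] [InnerProductSpace ℝ E]
  {a : ι → E} {b : ι → ℝ} {d : E}

theorem exists_pos_add_smul_mem_of_inner_active_nonpos (hd : ∀ j, ⟪a j, d⟫ ≤ b j) {y : E}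
    (hy : ∀ j, ⟪a j, d⟫ = b j → ⟪a j, y⟫ ≤ 0) : ∃ t : ℝ, 0 < t ∧ ∀ j, ⟪a j, d + t • y⟫ ≤ b j := by
  have hsmall : ∀ᶠ t in 𝓝[>] (0 : ℝ), ∀ j, ⟪a j, d + t • y⟫ ≤ b j := by
    refine eventually_all.mpr fun j => ?_
    rcases (hd j).eq_or_lt with hj | hj
    · filter_upwards [self_mem_nhdsWithin] with t (ht : 0 < t)
      rw [inner_add_right, real_inner_smul_right, hj]
      nlinarith [hy j hj]
    · have hcont : Continuous fun t : ℝ => ⟪a j, d + t • y⟫ := by fun_prop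
      have hnear := (hcont.tendsto' 0 _ (by simp)).eventually (gt_mem_nhds hj)
      exact nhdsWithin_le_nhds (hnear.mono fun t ht => ht.le)
  obtain ⟨t, ht, hpos⟩ := (hsmall.and self_mem_nhdsWithin).exists
  exact ⟨t, hpos, ht⟩

theorem mem_conicHullOn_active_of_forall_inner_sub_nonpos [CompleteSpace E]
    (hd : ∀ j, ⟪a j, d⟫ ≤ b j) {μ : E}
    (hμ : ∀ d', (∀ j, ⟪a j, d'⟫ ≤ b j) → ⟪μ, d' - d⟫ ≤ 0) :
    μ ∈ conicHullOn ℝ a {j | ⟪a j, d⟫ = b j} := by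
  by_contra hμC
  let C : ProperCone ℝ E := ⟨conicHullOn ℝ a {j | ⟪a j, d⟫ = b j}, isClosed_conicHullOn a _⟩
  obtain ⟨y, hyC, hμy⟩ := C.hyperplane_separation' hμC
  have hactive : ∀ j, ⟪a j, d⟫ = b j → ⟪a j, -y⟫ ≤ 0 := fun j hj => by
    simpa using hyC (a j) (apply_mem_conicHullOn hj)
  obtain ⟨t, ht, hdt⟩ := exists_pos_add_smul_mem_of_inner_active_nonpos hd hactive
  have hμt := hμ _ hdt
  rw [add_sub_cancel_left, real_inner_smul_right, inner_neg_right] at hμt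
  nlinarith

end Polyhedron

/-- a uniform generalized Farkas bound for a convex polyhedron:
every normal is a nonnegative combination of active constraint vectors with
coefficient sum bounded by β‖μ‖, uniformly in the point and the normal. -/
theorem polyhedron_uniform_farkas {p r : ℕ}
    (a : Fin r → EuclideanSpace ℝ (Fin p)) (b : Fin r → ℝ)
    (Q : Set (EuclideanSpace ℝ (Fin p)))
    (hQ : Q = {d | ∀ j, ⟪a j, d⟫ ≤ b j}) :
    ∃ β : ℝ, 0 ≤ β ∧ ∀ d ∈ Q, ∀ μ : EuclideanSpace ℝ (Fin p),
      (∀ d' ∈ Q, ⟪μ, d' - d⟫ ≤ (0 : ℝ)) →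
      ∃ ν : Fin r → ℝ, (∀ j, 0 ≤ ν j) ∧
        (∀ j, ν j ≠ 0 → ⟪a j, d⟫ = b j) ∧
        μ = ∑ j, ν j • a j ∧ ∑ j, ν j ≤ β * ‖μ‖ := by
  subst hQ
  obtain ⟨β, hβ, hbound⟩ := exists_uniform_sum_abs_le_mul_norm a
  refine ⟨β, hβ, fun d hd μ hμ => ?_⟩
  obtain ⟨ν₀, hν₀, hν₀J, rfl⟩ := mem_conicHullOn_active_of_forall_inner_sub_nonpos hd hμ
  obtain ⟨ν, hν, hνν₀, hind, hsum⟩ := exists_nonneg_linearIndepOn_sum_smul_eq a hν₀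
  refine ⟨ν, hν, fun j hj => hν₀J (hνν₀ hj), hsum.symm, ?_⟩
  calc ∑ j, ν j ≤ ∑ j, |ν j| := Finset.sum_le_sum fun j _ => le_abs_self (ν j)
    _ ≤ β * ‖∑ j, ν j • a j‖ := hbound ν hind
    _ = β * ‖∑ j, ν₀ j • a j‖ := by rw [hsum]
end

section
/- Let g: ℝᵐ × ℝⁿ → ℝˡ be continuously differentiable around (p̄,x̄), C ⊂ ℝˡ closed with g(p̄,x̄) ∈ C, and suppose there exist neighborhoods V of p̄, U of x̄ and κ ≥ 0 such that dist(x, Γ(p)) ≤ κ·dist(g(p,x), C) for all (p,x) ∈ V × U, where Γ(p) = {x : g(p,x) ∈ C}. Then the partial bounded multiplier property holds: after possibly shrinking V and U, for every p ∈ V, every x ∈ Γ(p) ∩ U, and every v ∈ N_{Γ(p)}(x) there exists λ ∈ N_C(g(p,x)) with ∇_x g(p,x)*λ = v and ‖λ‖ ≤ κ‖v‖. -/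
open Filter Topology
open scoped RealInnerProductSpace

/-!
For fixed `p`, Robinson stability says that `ξ ↦ g p ξ - C` is metrically subregular with
modulus `κ`, uniformly for all points near `(p̄, x̄)`. So it suffices to show, for
`Γ = h⁻¹(C)` with `h - C` subregular around `u`, that every `v ∈ N_Γ(u)` equals `∇h(u)* λ`
for some `λ ∈ N_C(h u)` with `‖λ‖ ≤ κ ‖v‖`.

For a regular normal `v` and `ε > 0`, the Fréchet inequality and subregularity make `u` an
approximate minimizer of the exact penalty `-⟪v, x - u⟫ + (κ + ε)(‖v‖ + ε) dist(h x, C)`.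
Minimizing the smoothed penalty `-⟪v, x - u⟫ + M ‖x - u‖² + α √(s² + dist(h x, C)²)` over a
small ball gives an interior minimizer `x` near `u`. With `y` a nearest point of `C` to `h x`,
the first-order condition at `x` writes `v` up to `O(ε)` as `∇h(x)* λ` for a proximal normal
`λ = (α / √(s² + ‖h x - y‖²)) (h x - y)` to `C` at `y`, with `‖λ‖ ≤ α`. Letting `ε → 0` along a
convergent subsequence of multipliers gives the estimate for regular normals. Because the
hypotheses hold at every point near `u`, a second limit gives it for limiting normals.
-/

open Metric

variable {E F : Type*} [NormedAddCommGroup E] [InnerProductSpace ℝ E]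
  [NormedAddCommGroup F] [InnerProductSpace ℝ F]

lemma regNormal_subset_limNormal {Ω : Set E} {z : E} (hz : z ∈ Ω) :
    regNormal Ω z ⊆ limNormal Ω z := fun v hv =>
  ⟨fun _ => z, fun _ => v, fun _ => hz, fun _ => hv, tendsto_const_nhds, tendsto_const_nhds⟩

lemma smul_mem_regNormal {Ω : Set E} {z v : E} (hv : v ∈ regNormal Ω z) {c : ℝ}
    (hc : 0 ≤ c) : c • v ∈ regNormal Ω z := fun u hu => by
  rw [real_inner_smul_left]
  exact mul_nonpos_of_nonneg_of_nonpos hc (hv u hu)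

lemma sub_mem_regNormal_of_forall_dist_le {Ω : Set E} {y q : E}
    (hmin : ∀ z ∈ Ω, dist q y ≤ dist q z) : q - y ∈ regNormal Ω y := by
  rintro u ⟨t, w, ht, ht0, hw, hmem⟩
  have hle : ∀ k, ⟪q - y, w k⟫ ≤ t k * ‖w k‖ ^ 2 / 2 := fun k => by
    have hk := hmin _ (hmem k)
    rw [dist_eq_norm, dist_eq_norm, show q - (y + t k • w k) = (q - y) - t k • w k by abel]
      at hk
    have hsmall := pow_le_pow_left₀ (norm_nonneg _) hk 2
    rw [norm_sub_sq_real (q - y), real_inner_smul_right, norm_smul, Real.norm_eq_abs, mul_pow,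
      sq_abs] at hsmall
    nlinarith [ht k]
  have hlim : Tendsto (fun k => t k * ‖w k‖ ^ 2 / 2) atTop (𝓝 0) := by
    simpa using (ht0.mul (hw.norm.pow 2)).div_const 2
  exact le_of_tendsto_of_tendsto (tendsto_const_nhds.inner hw) hlim (Eventually.of_forall hle)

lemma mem_contTangent_of_tendsto {Ω : Set E} {u a : E} {ζ : ℕ → E}
    (hζ : Tendsto ζ atTop (𝓝 u)) (hΩ : ∀ k, ζ k ∈ Ω) (hne : ∀ k, ζ k ≠ u)
    (ha : Tendsto (fun k => ‖ζ k - u‖⁻¹ • (ζ k - u)) atTop (𝓝 a)) : a ∈ contTangent Ω u := by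
  refine ⟨fun k => ‖ζ k - u‖, _, fun k => norm_pos_iff.2 (sub_ne_zero.2 (hne k)),
    by simpa using (hζ.sub_const u).norm, ha, fun k => ?_⟩
  rw [smul_inv_smul₀ (norm_ne_zero_iff.2 (sub_ne_zero.2 (hne k))), add_sub_cancel]
  exact hΩ k

lemma eventually_inner_sub_le_of_mem_regNormal [FiniteDimensional ℝ E] {Ω : Set E} {u v : E}
    (hv : v ∈ regNormal Ω u) {ε : ℝ} (hε : 0 < ε) :
    ∀ᶠ ζ in 𝓝 u, ζ ∈ Ω → ⟪v, ζ - u⟫ ≤ ε * ‖ζ - u‖ := by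
  by_contra hcon
  simp only [not_eventually, Classical.not_imp, not_le] at hcon
  obtain ⟨ζ, hζ, hζΩ⟩ := exists_seq_forall_of_frequently hcon
  choose hΩ hlt using hζΩ
  have hne : ∀ k, ζ k ≠ u := fun k hk => by simpa [hk] using hlt k
  set w := fun k => ‖ζ k - u‖⁻¹ • (ζ k - u)
  have hw : ∀ k, w k ∈ sphere (0 : E) 1 := fun k => by
    simp [w, norm_smul, sub_ne_zero.2 (hne k)]
  obtain ⟨a, -, φ, hφ, hwa⟩ := (isCompact_sphere (0 : E) 1).tendsto_subseq hw
  have hvw : ∀ k, ε ≤ ⟪v, w k⟫ := fun k => by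
    have hpos := norm_pos_iff.2 (sub_ne_zero.2 (hne k))
    rw [real_inner_smul_right, ← div_eq_inv_mul, le_div_iff₀ hpos]
    exact (hlt k).le
  have hva : ⟪v, a⟫ ≤ 0 := hv a (mem_contTangent_of_tendsto (hζ.comp hφ.tendsto_atTop)
    (fun k => hΩ _) (fun k => hne _) hwa)
  have := ge_of_tendsto (tendsto_const_nhds.inner hwa) (Eventually.of_forall fun k => hvw (φ k))
  linarith

lemma mem_limNormal_of_tendsto {C : Set F} {ys lams : ℕ → F} {y lam : F}
    (hys : Tendsto ys atTop (𝓝 y)) (hlam : Tendsto lams atTop (𝓝 lam))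
    (hmem : ∀ k, lams k ∈ limNormal C (ys k)) : lam ∈ limNormal C y := by
  have hdiag : ∀ k : ℕ, ∃ z μ, z ∈ C ∧ μ ∈ regNormal C z ∧
      dist (ys k) z < 1 / (k + 1) ∧ dist (lams k) μ < 1 / (k + 1) := fun k => by
    obtain ⟨zs, μs, hzC, hμ, hz, hμlim⟩ := hmem k
    obtain ⟨j, hj, hj'⟩ := ((hz.eventually (ball_mem_nhds _ Nat.one_div_pos_of_nat)).and
      (hμlim.eventually (ball_mem_nhds _ Nat.one_div_pos_of_nat))).exists
    exact ⟨zs j, μs j, hzC j, hμ j, by rwa [dist_comm], by rwa [dist_comm]⟩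
  choose z μ hzC hμ hzd hμd using hdiag
  have hsmall {a : ℕ → F} {b : ℕ → F} (hab : ∀ k, dist (a k) (b k) < 1 / (k + 1)) :
      Tendsto (fun k => dist (a k) (b k)) atTop (𝓝 0) :=
    squeeze_zero (fun _ => dist_nonneg) (fun k => (hab k).le)
      tendsto_one_div_add_atTop_nhds_zero_nat
  exact ⟨z, μ, hzC, hμ, hys.congr_dist (hsmall hzd), hlam.congr_dist (hsmall hμd)⟩

/-- `√(s² + q²)` is a differentiable stand-in for the exact penalty `q ≥ 0`. -/
noncomputable def smoothPenalty (v u : E) (M α s : ℝ) (f : E → ℝ) (x : E) : ℝ :=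
  -⟪v, x - u⟫ + M * ‖x - u‖ ^ 2 + α * √(s ^ 2 + f x ^ 2)

open ContinuousLinearMap in
lemma eq_add_adjoint_of_isLocalMin_smoothPenalty [CompleteSpace E] [CompleteSpace F]
    {h : E → F} {A : E →L[ℝ] F} {x u v : E} {y : F} (hA : HasFDerivAt h A x)
    {M α s : ℝ} (hs : s ≠ 0)
    (hmin : IsLocalMin (smoothPenalty v u M α s fun ξ => ‖h ξ - y‖) x) :
    v = (2 * M) • (x - u) +
      ContinuousLinearMap.adjoint A ((α / √(s ^ 2 + ‖h x - y‖ ^ 2)) • (h x - y)) := by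
  have hsub := (hasFDerivAt_id (𝕜 := ℝ) x).sub_const u
  have hderiv := (((hasFDerivAt_const v x).inner ℝ hsub).neg.add (hsub.norm_sq.const_mul M)).add
    ((((hA.sub_const y).norm_sq.const_add (s ^ 2)).sqrt (by positivity)).const_mul α)
  have hzero := hmin.hasFDerivAt_eq_zero hderiv
  refine ext_inner_right ℝ fun w => ?_
  have hw := congrArg (· w) hzero
  simp only [add_apply, neg_apply, smul_apply, comp_apply, innerSL_apply_apply,
    fderivInnerCLM_apply, prod_apply, zero_apply, id_apply, id_eq, inner_zero_left,
    add_zero, smul_eq_mul, nsmul_eq_mul, Nat.cast_ofNat] at hw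
  have hS : √(s ^ 2 + ‖h x - y‖ ^ 2) ≠ 0 := (Real.sqrt_pos.2 (by positivity)).ne'
  rw [inner_add_left, real_inner_smul_left, adjoint_inner_left, real_inner_smul_left]
  field_simp at hw ⊢
  linarith

lemma inner_sub_le_add_infDist {Γ : Set E} {u v x : E} (hu : u ∈ Γ) {ε R : ℝ} (hε : 0 ≤ ε)
    (hF : ∀ ζ ∈ Γ, dist ζ u < R → ⟪v, ζ - u⟫ ≤ ε * ‖ζ - u‖) (hx : 2 * dist x u < R) :
    ⟪v, x - u⟫ ≤ ε * dist x u + (‖v‖ + ε) * infDist x Γ := by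
  refine le_of_forall_pos_lt_add fun δ hδ => ?_
  set η := min (δ / (‖v‖ + ε + 1)) (R - 2 * dist x u)
  have hη : 0 < η := lt_min (by positivity) (by linarith)
  obtain ⟨ζ, hζ, hxζ⟩ := (infDist_lt_iff ⟨u, hu⟩).1 (lt_add_of_pos_right (infDist x Γ) hη)
  have hζu : dist ζ u ≤ dist x ζ + dist x u := dist_triangle_left ζ u x
  have hxζ' : dist x ζ < dist x u + η :=
    hxζ.trans_le (by gcongr; exact infDist_le_dist_of_mem hu)
  have hηδ : (‖v‖ + ε) * η < δ := by
    calc (‖v‖ + ε) * η ≤ (‖v‖ + ε) * (δ / (‖v‖ + ε + 1)) := by gcongr; exact min_le_left _ _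
      _ < δ := by rw [mul_div_assoc', div_lt_iff₀ (by positivity)]; nlinarith
  calc ⟪v, x - u⟫ = ⟪v, ζ - u⟫ + ⟪v, x - ζ⟫ := by rw [← inner_add_right, sub_add_sub_cancel']
    _ ≤ ε * dist ζ u + ‖v‖ * dist x ζ := by
      rw [dist_eq_norm ζ, dist_eq_norm x]
      gcongr
      · exact hF ζ hζ (by linarith [min_le_right (δ / (‖v‖ + ε + 1)) (R - 2 * dist x u)])
      · exact real_inner_le_norm v (x - ζ)
    _ ≤ ε * dist x u + (‖v‖ + ε) * dist x ζ := by nlinarith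
    _ ≤ ε * dist x u + (‖v‖ + ε) * (infDist x Γ + η) := by gcongr
    _ < ε * dist x u + (‖v‖ + ε) * infDist x Γ + δ := by linarith

lemma exists_regNormal_of_isLocalMin_smoothPenalty [CompleteSpace E] [CompleteSpace F]
    [ProperSpace F] {h : E → F} {A : E →L[ℝ] F} {C : Set F} (hC : IsClosed C)
    (hne : C.Nonempty) {x u v : E} (hA : HasFDerivAt h A x) {M α s : ℝ} (hα : 0 ≤ α)
    (hs : 0 < s) (hmin : IsLocalMin (smoothPenalty v u M α s fun ξ => infDist (h ξ) C) x) :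
    ∃ y ∈ C, dist (h x) y = infDist (h x) C ∧ ∃ lam ∈ regNormal C y, ‖lam‖ ≤ α ∧
      v = (2 * M) • (x - u) + ContinuousLinearMap.adjoint A lam := by
  obtain ⟨y, hyC, hy⟩ := hC.exists_infDist_eq_dist hne (h x)
  -- `y` realizes `infDist (h x) C`, so the penalty built on `‖h ξ - y‖` touches the one built
  -- on `infDist (h ξ) C` from above at `x`.
  have hloc : IsLocalMin (smoothPenalty v u M α s fun ξ => ‖h ξ - y‖) x := by
    refine hmin.mono fun ξ hξ => ?_
    calc smoothPenalty v u M α s (fun ξ => ‖h ξ - y‖) x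
        = smoothPenalty v u M α s (fun ξ => infDist (h ξ) C) x := by
          simp only [smoothPenalty, hy, dist_eq_norm]
      _ ≤ smoothPenalty v u M α s (fun ξ => infDist (h ξ) C) ξ := hξ
      _ ≤ smoothPenalty v u M α s (fun ξ => ‖h ξ - y‖) ξ := by
          unfold smoothPenalty
          gcongr
          · exact infDist_nonneg
          · exact (infDist_le_dist_of_mem hyC).trans_eq (dist_eq_norm _ _)
  have hS : ‖h x - y‖ ≤ √(s ^ 2 + ‖h x - y‖ ^ 2) :=
    (le_abs_self _).trans (Real.abs_le_sqrt (by nlinarith))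
  refine ⟨y, hyC, hy.symm, _, smul_mem_regNormal
    (sub_mem_regNormal_of_forall_dist_le fun z hz => hy ▸ infDist_le_dist_of_mem hz)
    (by positivity), ?_, eq_add_adjoint_of_isLocalMin_smoothPenalty hA hs.ne' hloc⟩
  rw [norm_smul, Real.norm_of_nonneg (by positivity), div_mul_eq_mul_div,
    div_le_iff₀ (Real.sqrt_pos.2 (by positivity))]
  gcongr

lemma mul_norm_sub_le_of_smoothPenalty_le {f : E → ℝ} {x u v : E} {M α s ε : ℝ} (hM : 0 < M)
    (hε : 0 ≤ ε) (hs : M * (α * s) = ε ^ 2)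
    (hinner : ⟪v, x - u⟫ ≤ ε * ‖x - u‖ + α * √(s ^ 2 + f x ^ 2))
    (hval : smoothPenalty v u M α s f x ≤ α * s) : M * ‖x - u‖ ≤ 2 * ε := by
  have h1 : M * ‖x - u‖ ^ 2 ≤ ε * ‖x - u‖ + α * s := by
    unfold smoothPenalty at hval
    linarith
  nlinarith [mul_le_mul_of_nonneg_left h1 hM.le, norm_nonneg (x - u)]

lemma exists_approx_multiplier [FiniteDimensional ℝ E] [FiniteDimensional ℝ F] {h : E → F}
    {C : Set F} (hC : IsClosed C) {u : E} (hu : h u ∈ C)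
    (hh : ∀ᶠ x in 𝓝 u, DifferentiableAt ℝ h x) {κ : ℝ} (hκ : 0 ≤ κ)
    (hsub : ∀ᶠ ξ in 𝓝 u, infDist ξ {x | h x ∈ C} ≤ κ * infDist (h ξ) C)
    {v : E} (hv : v ∈ regNormal {x | h x ∈ C} u) {ε : ℝ} (hε : 0 < ε) :
    ∃ x y lam, dist x u ≤ ε ∧ dist y (h u) ≤ 2 * dist (h x) (h u) ∧ y ∈ C ∧
      lam ∈ regNormal C y ∧ ‖lam‖ ≤ (κ + ε) * (‖v‖ + ε) ∧
      ‖ContinuousLinearMap.adjoint (fderiv ℝ h x) lam - v‖ ≤ 4 * ε := by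
  obtain ⟨r, hr, hball⟩ := eventually_nhds_iff_ball.1
    ((hh.and hsub).and (eventually_inner_sub_le_of_mem_regNormal hv hε))
  set ρ := min (r / 4) ε
  have hρ : 0 < ρ := by positivity
  have hρr : closedBall u ρ ⊆ ball u r :=
    closedBall_subset_ball ((min_le_left _ _).trans_lt (by linarith))
  -- `M * (α * s) = ε ^ 2` is what confines the minimizer to `closedBall u (ρ / 4)`.
  set α := (κ + ε) * (‖v‖ + ε)
  set M := 8 * ε / ρ
  set s := ε ^ 2 / (M * α)
  have hs : 0 < s := by positivity
  set Φ := smoothPenalty v u M α s fun ξ => infDist (h ξ) C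
  have hcont : ContinuousOn h (closedBall u ρ) := fun ξ hξ =>
    (hball ξ (hρr hξ)).1.1.continuousAt.continuousWithinAt
  have hΦ : ContinuousOn Φ (closedBall u ρ) := by
    simp only [Φ]
    unfold smoothPenalty
    fun_prop
  obtain ⟨x, hxρ, hmin⟩ :=
    (isCompact_closedBall u ρ).exists_isMinOn (nonempty_closedBall.2 hρ.le) hΦ
  obtain ⟨⟨hdiff, hsubx⟩, -⟩ := hball x (hρr hxρ)
  set q := infDist (h x) C
  have hinner : ⟪v, x - u⟫ ≤ ε * ‖x - u‖ + α * √(s ^ 2 + q ^ 2) := by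
    have h2d : 2 * dist x u < r := by linarith [mem_closedBall.1 hxρ, min_le_left (r / 4) ε]
    have hq : q ≤ √(s ^ 2 + q ^ 2) := (le_abs_self q).trans (Real.abs_le_sqrt (by nlinarith))
    calc ⟪v, x - u⟫ ≤ ε * dist x u + (‖v‖ + ε) * infDist x {x | h x ∈ C} :=
          inner_sub_le_add_infDist (Γ := {x | h x ∈ C}) hu hε.le
            (fun ζ hζ hζu => (hball ζ hζu).2 hζ) h2d
      _ ≤ ε * ‖x - u‖ + (‖v‖ + ε) * ((κ + ε) * √(s ^ 2 + q ^ 2)) := by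
          rw [dist_eq_norm]
          gcongr
          exact hsubx.trans (mul_le_mul (by linarith) hq infDist_nonneg (by positivity))
      _ = ε * ‖x - u‖ + α * √(s ^ 2 + q ^ 2) := by ring
  have hMd : M * ‖x - u‖ ≤ 2 * ε := mul_norm_sub_le_of_smoothPenalty_le (by positivity) hε.le
    (by rw [← mul_assoc]; exact mul_div_cancel₀ _ (by positivity)) hinner
    ((hmin (mem_closedBall_self hρ.le)).trans_eq
      (by simp [Φ, smoothPenalty, infDist_zero_of_mem hu, Real.sqrt_sq hs.le]))
  have hxu : ‖x - u‖ ≤ ρ / 4 := by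
    rw [div_mul_eq_mul_div, div_le_iff₀ hρ] at hMd
    nlinarith
  have hloc : IsLocalMin Φ x := hmin.isLocalMin
    (closedBall_mem_nhds_of_mem (mem_ball_iff_norm.2 (by linarith)))
  obtain ⟨y, hyC, hy, lam, hlam, hlamα, hfoc⟩ := exists_regNormal_of_isLocalMin_smoothPenalty
    hC ⟨h u, hu⟩ hdiff.hasFDerivAt (by positivity) hs hloc
  refine ⟨x, y, lam, ?_, ?_, hyC, hlam, hlamα, ?_⟩
  · rw [dist_eq_norm]
    linarith [min_le_right (r / 4) ε]
  · linarith [dist_triangle_left y (h u) (h x), hy ▸ infDist_le_dist_of_mem (x := h x) hu]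
  · rw [hfoc, sub_add_cancel_right, norm_neg, norm_smul, Real.norm_of_nonneg (by positivity)]
    linarith

/-- Closedness of the multiplier relation, by compactness of bounded multipliers. -/
lemma exists_mem_limNormal_of_tendsto {G : Type*} [NormedAddCommGroup G] [NormedSpace ℝ G]
    [FiniteDimensional ℝ F] {C : Set F} {ys lams : ℕ → F} {y : F}
    (hys : Tendsto ys atTop (𝓝 y)) (hmem : ∀ k, lams k ∈ limNormal C (ys k))
    {bs : ℕ → ℝ} {b : ℝ} (hbs : Tendsto bs atTop (𝓝 b)) (hbound : ∀ k, ‖lams k‖ ≤ bs k)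
    {A : ℕ → F →L[ℝ] G} {A₀ : F →L[ℝ] G} (hA : Tendsto A atTop (𝓝 A₀)) {v : G}
    (hv : Tendsto (fun k => A k (lams k)) atTop (𝓝 v)) :
    ∃ lam ∈ limNormal C y, ‖lam‖ ≤ b ∧ v = A₀ lam := by
  obtain ⟨B, hB⟩ := hbs.bddAbove_range
  have hball : ∀ k, lams k ∈ closedBall (0 : F) B := fun k => by
    simpa using (hbound k).trans (hB ⟨k, rfl⟩)
  obtain ⟨lam, -, φ, hφ, hlam⟩ := (isCompact_closedBall (0 : F) B).tendsto_subseq hball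
  have hφ' := hφ.tendsto_atTop
  refine ⟨lam, mem_limNormal_of_tendsto (hys.comp hφ') hlam fun k => hmem (φ k),
    le_of_tendsto_of_tendsto hlam.norm (hbs.comp hφ') (Eventually.of_forall fun k => hbound _),
    tendsto_nhds_unique (hv.comp hφ') ?_⟩
  exact (isBoundedBilinearMap_apply.continuous.tendsto (A₀, lam)).comp
    ((hA.comp hφ').prodMk_nhds hlam)

lemma tendsto_adjoint_fderiv [CompleteSpace E] [CompleteSpace F] {h : E → F} {u : E}
    (hh : ContinuousAt (fderiv ℝ h) u) {xs : ℕ → E} (hxs : Tendsto xs atTop (𝓝 u)) :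
    Tendsto (fun k => ContinuousLinearMap.adjoint (fderiv ℝ h (xs k))) atTop
      (𝓝 (ContinuousLinearMap.adjoint (fderiv ℝ h u))) :=
  (ContinuousLinearMap.adjoint.continuous.tendsto _).comp (hh.tendsto.comp hxs)

def HasBoundedMultiplier [CompleteSpace E] [CompleteSpace F] (h : E → F) (C : Set F) (κ : ℝ)
    (x v : E) : Prop :=
  ∃ lam ∈ limNormal C (h x), ‖lam‖ ≤ κ * ‖v‖ ∧
    v = ContinuousLinearMap.adjoint (fderiv ℝ h x) lam

section Multipliers

variable [FiniteDimensional ℝ E] [FiniteDimensional ℝ F]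

lemma hasBoundedMultiplier_of_mem_regNormal {h : E → F} {C : Set F} (hC : IsClosed C)
    {u : E} (hu : h u ∈ C) (hh : ∀ᶠ x in 𝓝 u, ContDiffAt ℝ 1 h x) {κ : ℝ} (hκ : 0 ≤ κ)
    (hsub : ∀ᶠ ξ in 𝓝 u, infDist ξ {x | h x ∈ C} ≤ κ * infDist (h ξ) C)
    {v : E} (hv : v ∈ regNormal {x | h x ∈ C} u) : HasBoundedMultiplier h C κ u v := by
  have happrox := fun k : ℕ => exists_approx_multiplier hC hu
    (hh.mono fun x hx => hx.differentiableAt one_ne_zero) hκ hsub hv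
    (Nat.one_div_pos_of_nat (n := k))
  choose xs ys lams hxs hys hyC hlam hbound hadj using happrox
  have hε : Tendsto (fun k : ℕ => 1 / ((k : ℝ) + 1)) atTop (𝓝 0) :=
    tendsto_one_div_add_atTop_nhds_zero_nat
  have hxu : Tendsto xs atTop (𝓝 u) :=
    tendsto_iff_dist_tendsto_zero.2 (squeeze_zero (fun _ => dist_nonneg) hxs hε)
  have hhu := tendsto_iff_dist_tendsto_zero.1 (hh.self_of_nhds.continuousAt.tendsto.comp hxu)
  have hyu : Tendsto ys atTop (𝓝 (h u)) := tendsto_iff_dist_tendsto_zero.2 <|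
    squeeze_zero (fun _ => dist_nonneg) hys (by simpa using hhu.const_mul 2)
  exact exists_mem_limNormal_of_tendsto hyu (fun k => regNormal_subset_limNormal (hyC k) (hlam k))
    (by simpa using ((hε.const_add κ).mul (hε.const_add ‖v‖))) hbound
    (tendsto_adjoint_fderiv (hh.self_of_nhds.continuousAt_fderiv one_ne_zero) hxu)
    (tendsto_iff_norm_sub_tendsto_zero.2 <|
      squeeze_zero (fun _ => norm_nonneg _) hadj (by simpa using hε.const_mul 4))

lemma hasBoundedMultiplier_of_mem_limNormal {h : E → F} {C : Set F} (hC : IsClosed C)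
    {U : Set E} (hU : IsOpen U) {u : E} (hu : u ∈ U) (hh : ∀ x ∈ U, ContDiffAt ℝ 1 h x)
    {κ : ℝ} (hκ : 0 ≤ κ) (hsub : ∀ ξ ∈ U, infDist ξ {x | h x ∈ C} ≤ κ * infDist (h ξ) C)
    {v : E} (hv : v ∈ limNormal {x | h x ∈ C} u) : HasBoundedMultiplier h C κ u v := by
  obtain ⟨zs, vs, hzΓ, hvreg, hzs, hvs⟩ := hv
  obtain ⟨φ, hφ, hφU⟩ :=
    extraction_of_frequently_atTop (hzs.eventually (hU.mem_nhds hu)).frequently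
  have hmult : ∀ k, HasBoundedMultiplier h C κ (zs (φ k)) (vs (φ k)) := fun k =>
    hasBoundedMultiplier_of_mem_regNormal hC (hzΓ _)
      (eventually_of_mem (hU.mem_nhds (hφU k)) hh) hκ
      (eventually_of_mem (hU.mem_nhds (hφU k)) hsub) (hvreg _)
  choose lams hlam hbound heq using hmult
  have hz := hzs.comp hφ.tendsto_atTop
  have hv := hvs.comp hφ.tendsto_atTop
  exact exists_mem_limNormal_of_tendsto ((hh u hu).continuousAt.tendsto.comp hz) hlam
    (hv.norm.const_mul κ) hbound
    (tendsto_adjoint_fderiv ((hh u hu).continuousAt_fderiv one_ne_zero) hz)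
    (hv.congr heq)

end Multipliers

theorem robinson_stability_implies_bmp_general {m n l : ℕ}
    (g : EuclideanSpace ℝ (Fin m) → EuclideanSpace ℝ (Fin n) →
      EuclideanSpace ℝ (Fin l))
    (C : Set (EuclideanSpace ℝ (Fin l))) (hC : IsClosed C)
    (pb : EuclideanSpace ℝ (Fin m)) (xb : EuclideanSpace ℝ (Fin n))
    (hg : ContDiffAt ℝ 1
      (fun q : EuclideanSpace ℝ (Fin m) × EuclideanSpace ℝ (Fin n) => g q.1 q.2)
      (pb, xb))
    (V : Set (EuclideanSpace ℝ (Fin m))) (U : Set (EuclideanSpace ℝ (Fin n)))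
    (hV : V ∈ 𝓝 pb) (hU : U ∈ 𝓝 xb) (κ : ℝ) (hκ : 0 ≤ κ)
    (hRS : ∀ p ∈ V, ∀ x ∈ U,
      Metric.infDist x {ξ | g p ξ ∈ C} ≤ κ * Metric.infDist (g p x) C) :
    ∃ V' ∈ 𝓝 pb, ∃ U' ∈ 𝓝 xb, V' ⊆ V ∧ U' ⊆ U ∧
      ∀ p ∈ V', ∀ x ∈ U', g p x ∈ C →
        ∀ v ∈ limNormal {ξ | g p ξ ∈ C} x,
          ∃ lam ∈ limNormal C (g p x),
            ‖lam‖ ≤ κ * ‖v‖ ∧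
            v = (ContinuousLinearMap.adjoint (fderiv ℝ (g p) x)) lam := by
  obtain ⟨V₁, U₁, hV₁, hpb, hU₁, hxb, hsmooth⟩ :=
    mem_nhds_prod_iff'.1 (hg.eventually (by simp))
  refine ⟨V ∩ V₁, inter_mem hV (hV₁.mem_nhds hpb), interior U ∩ U₁,
    inter_mem (interior_mem_nhds.2 hU) (hU₁.mem_nhds hxb), Set.inter_subset_left,
    Set.inter_subset_left.trans interior_subset, ?_⟩
  rintro p ⟨hpV, hpV₁⟩ x hx - v hv
  refine hasBoundedMultiplier_of_mem_limNormal hC (isOpen_interior.inter hU₁) hx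
    (fun ξ hξ => ?_) hκ (fun ξ hξ => hRS p hpV ξ (interior_subset hξ.1)) hv
  have hpξ : ContDiffAt ℝ 1 (fun q => g q.1 q.2) (p, ξ) := hsmooth ⟨hpV₁, hξ.2⟩
  exact hpξ.comp ξ (contDiffAt_const.prodMk contDiffAt_id)

/-- Robinson stability implies the partial bounded multiplier
property with the same modulus κ. -/
theorem robinson_stability_implies_bmp {m n l : ℕ}
    (g : EuclideanSpace ℝ (Fin m) → EuclideanSpace ℝ (Fin n) →
      EuclideanSpace ℝ (Fin l))
    (C : Set (EuclideanSpace ℝ (Fin l))) (hC : IsClosed C)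
    (pb : EuclideanSpace ℝ (Fin m)) (xb : EuclideanSpace ℝ (Fin n))
    (hg : ContDiffAt ℝ 1
      (fun q : EuclideanSpace ℝ (Fin m) × EuclideanSpace ℝ (Fin n) => g q.1 q.2)
      (pb, xb))
    (hfeas : g pb xb ∈ C)
    (V : Set (EuclideanSpace ℝ (Fin m))) (U : Set (EuclideanSpace ℝ (Fin n)))
    (hV : V ∈ 𝓝 pb) (hU : U ∈ 𝓝 xb) (κ : ℝ) (hκ : 0 ≤ κ)
    (hRS : ∀ p ∈ V, ∀ x ∈ U,
      Metric.infDist x {ξ | g p ξ ∈ C} ≤ κ * Metric.infDist (g p x) C) :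
    ∃ V' ∈ 𝓝 pb, ∃ U' ∈ 𝓝 xb, V' ⊆ V ∧ U' ⊆ U ∧
      ∀ p ∈ V', ∀ x ∈ U', g p x ∈ C →
        ∀ v ∈ limNormal {ξ | g p ξ ∈ C} x,
          ∃ lam ∈ limNormal C (g p x),
            ‖lam‖ ≤ κ * ‖v‖ ∧
            v = (ContinuousLinearMap.adjoint (fderiv ℝ (g p) x)) lam :=
  robinson_stability_implies_bmp_general g C hC pb xb hg V U hV hU κ hκ hRS
end
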